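/- Let n = m be even with n ≥ 8, and consider the Probabilistic Serial mechanism where agents 1 and 2 report o_1 ≻ o_2 ≻ ⋯ ≻ o_n and each agent i ∈ {3,…,n} reports o_2 ≻ o_3 ≻ ⋯ ≻ o_n ≻ o_1. Then in the resulting eating process, agent 1 receives exactly 1/2 of item o_1 and receives 0 of each of the items o_2, o_3, …, o_{n/2−1}. In particular, if agent 1's utilities are dichotomous with interest set O̅ = {o_1,…,o_{n/2−1}} (so its report is truthful), its truthful utility is u_1 = 1/2. -/

import Mathlib

open MeasureTheory

/-- An execution of the Probabilistic Serial eating process with `n` agents and `m` items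
(each of supply 1).  Agent `i` reports the strict preference order encoded by the injective
rank function `rk i` (`rk i j < rk i j'` means agent `i` ranks item `j` above item `j'`).
`active i t` tells whether agent `i` participates (eats at rate 1) at time `t`; the normal
scenario is `active = fun _ _ => True`, pausing/removing agents is modelled by making them
inactive.  `eats i t = some j` means agent `i` is eating item `j` at time `t`, and `rem j t`
is the remaining supply of item `j` at time `t`: it equals `1` minus the total time agents
have spent eating `j` during `(0, t]`.  An active agent always eats its most preferred item
among those with positive remaining supply. -/
structure PSExec (n m : ℕ) (rk : Fin n → Fin m → ℕ) (active : Fin n → ℝ → Prop) where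
  eats : Fin n → ℝ → Option (Fin m)
  rem : Fin m → ℝ → ℝ
  meas : ∀ i j, MeasurableSet {t : ℝ | eats i t = some j}
  rem_def : ∀ j, ∀ t : ℝ, 0 ≤ t →
    rem j t = 1 - ∑ i : Fin n,
      (volume {s : ℝ | 0 < s ∧ s ≤ t ∧ eats i s = some j}).toReal
  eats_iff : ∀ i, ∀ t : ℝ, 0 ≤ t → active i t → ∀ j,
    (eats i t = some j ↔ 0 < rem j t ∧ ∀ j', 0 < rem j' t → rk i j ≤ rk i j')
  eats_none : ∀ i, ∀ t : ℝ, ¬ active i t → eats i t = none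

namespace PSExec

variable {n m : ℕ} {rk : Fin n → Fin m → ℕ} {active : Fin n → ℝ → Prop}

/-- The total amount of item `j` eaten by agent `i` (the allocation `x i j`). -/
noncomputable def alloc (E : PSExec n m rk active) (i : Fin n) (j : Fin m) : ℝ :=
  (volume {s : ℝ | 0 < s ∧ E.eats i s = some j}).toReal

/-- The expected utility of agent `i` with cardinal utilities `a`. -/
noncomputable def utility (E : PSExec n m rk active) (a : Fin m → ℝ) (i : Fin n) : ℝ :=
  ∑ j, a j * E.alloc i j

/-- Item `j` is exhausted exactly at time `τ`. -/
def exhaustedAt (E : PSExec n m rk active) (j : Fin m) (τ : ℝ) : Prop :=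
  0 < τ ∧ E.rem j τ = 0 ∧ ∀ s : ℝ, 0 ≤ s → s < τ → 0 < E.rem j s

/-- Agent `i` is eating item `j` at the moment `τ`, in the left-limit sense (this is the
sense used for "eating an item at the moment of its exhaustion"). -/
def eatsAt (E : PSExec n m rk active) (i : Fin n) (j : Fin m) (τ : ℝ) : Prop :=
  ∃ δ > 0, ∀ s : ℝ, τ - δ < s → s < τ → E.eats i s = some j

/-- `T` is the exact moment at which the last item of `Obar` is exhausted. -/
def exhaustTime (E : PSExec n m rk active) (Obar : Finset (Fin m)) (T : ℝ) : Prop :=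
  (∀ j ∈ Obar, E.rem j T = 0) ∧ ∀ s : ℝ, 0 ≤ s → s < T → ∃ j ∈ Obar, 0 < E.rem j s

end PSExec

/-- Dichotomous cardinal utilities with interest set `Obar`. -/
def dicho {m : ℕ} (Obar : Finset (Fin m)) : Fin m → ℝ :=
  fun j => if j ∈ Obar then 1 else 0

/-!
Before time `1/2` the `n` agents have eaten at most `n/2 < n - 1` units in total, so some item
other than `o₁` is always available and the agents ranking `o₁` last leave it alone; `o₁` is
eaten by agents 1 and 2 alone and is exhausted exactly at time `1/2`. While `o_{j+1}` lasts,
the other `n - 2` agents eat only from `o₂, …, o_{j+1}`; as `(n - 2)/2 > j` for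
`j ≤ n/2 - 2`, each of `o₂, …, o_{n/2-1}` is gone by time `1/2`, when agent 1 leaves `o₁`.
-/

open Set

namespace PSExec

section General

variable {n m : ℕ} {rk : Fin n → Fin m → ℕ} {active : Fin n → ℝ → Prop}
  (E : PSExec n m rk active) {i : Fin n} {j : Fin m} {a b t : ℝ}

noncomputable def eatingTime (i : Fin n) (j : Fin m) (a b : ℝ) : ℝ :=
  (volume (Ioc a b ∩ {s | E.eats i s = some j})).toReal

lemma eatingTime_nonneg : 0 ≤ E.eatingTime i j a b := ENNReal.toReal_nonneg

lemma volume_Ioc_inter_eats_ne_top (i : Fin n) (j : Fin m) (a b : ℝ) :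
    volume (Ioc a b ∩ {s | E.eats i s = some j}) ≠ ⊤ :=
  ((measure_mono inter_subset_left).trans_lt measure_Ioc_lt_top).ne

lemma eatingTime_add {c : ℝ} (hab : a ≤ b) (hbc : b ≤ c) :
    E.eatingTime i j a b + E.eatingTime i j b c = E.eatingTime i j a c := by
  have hdisj : Disjoint (Ioc a b ∩ {s | E.eats i s = some j})
      (Ioc b c ∩ {s | E.eats i s = some j}) :=
    (Ioc_disjoint_Ioc_of_le le_rfl).mono inter_subset_left inter_subset_left
  rw [eatingTime, eatingTime, eatingTime, ← Ioc_union_Ioc_eq_Ioc hab hbc,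
    union_inter_distrib_right, measure_union hdisj (measurableSet_Ioc.inter (E.meas i j)),
    ENNReal.toReal_add (E.volume_Ioc_inter_eats_ne_top i j a b)
      (E.volume_Ioc_inter_eats_ne_top i j b c)]

lemma sum_eatingTime_eq_volume_biUnion (i : Fin n) (K : Finset (Fin m)) (a b : ℝ) :
    ∑ k ∈ K, E.eatingTime i k a b
      = (volume (⋃ k ∈ K, Ioc a b ∩ {s | E.eats i s = some k})).toReal := by
  rw [measure_biUnion_finset _ fun k _ => measurableSet_Ioc.inter (E.meas i k),
    ENNReal.toReal_sum fun k _ => E.volume_Ioc_inter_eats_ne_top i k a b]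
  · rfl
  · intro k _ k' _ hkk'
    refine (Set.disjoint_left.2 fun s hs hs' => hkk' ?_).mono inter_subset_right inter_subset_right
    exact Option.some_injective _ (hs.symm.trans hs')

lemma sum_eatingTime_le (K : Finset (Fin m)) (hab : a ≤ b) :
    ∑ k ∈ K, E.eatingTime i k a b ≤ b - a := by
  rw [E.sum_eatingTime_eq_volume_biUnion, ← Real.volume_real_Ioc_of_le hab]
  exact measureReal_mono (iUnion₂_subset fun _ _ => inter_subset_left) measure_Ioc_lt_top.ne

lemma eatingTime_le (hab : a ≤ b) : E.eatingTime i j a b ≤ b - a := by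
  simpa using E.sum_eatingTime_le {j} hab

lemma le_sum_eatingTime (K : Finset (Fin m)) (hab : a ≤ b)
    (h : ∀ s ∈ Ioo a b, ∃ k ∈ K, E.eats i s = some k) :
    b - a ≤ ∑ k ∈ K, E.eatingTime i k a b := by
  rw [E.sum_eatingTime_eq_volume_biUnion, ← Real.volume_real_Ioo_of_le hab]
  refine measureReal_mono (fun s hs => ?_)
    ((measure_mono (iUnion₂_subset fun _ _ => inter_subset_left)).trans_lt measure_Ioc_lt_top).ne
  obtain ⟨k, hk, hks⟩ := h s hs
  exact mem_biUnion hk ⟨Ioo_subset_Ioc_self hs, hks⟩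

lemma rem_eq (ht : 0 ≤ t) : E.rem j t = 1 - ∑ i, E.eatingTime i j 0 t := by
  rw [E.rem_def j t ht]
  congr 2 with i
  congr 2 with s
  simp [and_assoc]

lemma rem_zero : E.rem j 0 = 1 := by
  simp [E.rem_eq le_rfl, eatingTime]

lemma rem_sub_rem (ha : 0 ≤ a) (hab : a ≤ b) :
    E.rem j a - E.rem j b = ∑ i, E.eatingTime i j a b := by
  simp only [E.rem_eq ha, E.rem_eq (ha.trans hab), ← E.eatingTime_add ha hab,
    Finset.sum_add_distrib]
  ring

lemma rem_le_rem (ha : 0 ≤ a) (hab : a ≤ b) : E.rem j b ≤ E.rem j a := by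
  have := E.rem_sub_rem (j := j) ha hab
  have : 0 ≤ ∑ i, E.eatingTime i j a b := Finset.sum_nonneg fun _ _ => E.eatingTime_nonneg
  linarith

lemma rem_sub_rem_le (ha : 0 ≤ a) (hab : a ≤ b) :
    E.rem j a - E.rem j b ≤ n * (b - a) := by
  rw [E.rem_sub_rem ha hab]
  refine (Finset.sum_le_sum fun i _ => E.eatingTime_le (i := i) (j := j) hab).trans_eq ?_
  simp [mul_sub]

lemma continuousOn_rem (j : Fin m) : ContinuousOn (E.rem j) (Ici 0) := by
  refine (LipschitzOnWith.of_dist_le' (K := n) fun x hx y hy => ?_).continuousOn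
  have key : ∀ x y : ℝ, 0 ≤ x → x ≤ y → |E.rem j x - E.rem j y| ≤ n * |x - y| := by
    intro x y hx hxy
    rw [abs_of_nonneg (sub_nonneg.2 (E.rem_le_rem hx hxy)), abs_sub_comm,
      abs_of_nonneg (sub_nonneg.2 hxy)]
    exact E.rem_sub_rem_le hx hxy
  rw [Real.dist_eq, Real.dist_eq]
  rcases le_total x y with hxy | hyx
  · exact key x y hx hxy
  · rw [abs_sub_comm, abs_sub_comm x]
    exact key y x hy hyx

lemma rem_pos_of_eats (ht : 0 ≤ t) (h : E.eats i t = some j) : 0 < E.rem j t := by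
  have hi : active i t := by
    by_contra hi
    simp [E.eats_none i t hi] at h
  exact ((E.eats_iff i t ht hi j).1 h).1

lemma eats_ne_of_rem_nonpos (ht : 0 ≤ t) (h : E.rem j t ≤ 0) : E.eats i t ≠ some j :=
  fun hij => (E.rem_pos_of_eats ht hij).not_ge h

lemma rem_eq_of_rem_nonpos (ha : 0 ≤ a) (hab : a ≤ b) (h : E.rem j a ≤ 0) :
    E.rem j b = E.rem j a := by
  have hidle : ∀ i, E.eatingTime i j a b = 0 := by
    intro i
    rw [eatingTime, ENNReal.toReal_eq_zero_iff]
    left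
    convert measure_empty (μ := volume)
    refine eq_empty_of_forall_notMem fun s ⟨hs, hij⟩ => E.eats_ne_of_rem_nonpos
      (ha.trans hs.1.le) ?_ hij
    exact (E.rem_le_rem ha hs.1.le).trans h
  have := E.rem_sub_rem (j := j) ha hab
  simp only [hidle, Finset.sum_const_zero] at this
  linarith

lemma rem_nonneg (ht : 0 ≤ t) : 0 ≤ E.rem j t := by
  by_contra! hneg
  -- the supply would pass through zero at some `τ ≤ t` and stay frozen from then on
  obtain ⟨τ, hτ, hτ0⟩ :=
    intermediate_value_Icc' ht ((E.continuousOn_rem j).mono Icc_subset_Ici_self)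
    ⟨hneg.le, E.rem_zero.symm ▸ zero_le_one⟩
  have := E.rem_eq_of_rem_nonpos hτ.1 hτ.2 hτ0.le
  linarith

lemma sum_one_sub_rem (K : Finset (Fin m)) (ht : 0 ≤ t) :
    ∑ k ∈ K, (1 - E.rem k t) = ∑ i, ∑ k ∈ K, E.eatingTime i k 0 t := by
  rw [Finset.sum_comm]
  exact Finset.sum_congr rfl fun k _ => by rw [E.rem_eq ht, sub_sub_cancel]

lemma sum_one_sub_rem_le_mul (K : Finset (Fin m)) (ht : 0 ≤ t) :
    ∑ k ∈ K, (1 - E.rem k t) ≤ n * t := by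
  rw [E.sum_one_sub_rem K ht]
  refine (Finset.sum_le_sum fun i _ => E.sum_eatingTime_le (i := i) K ht).trans_eq ?_
  simp

lemma sum_one_sub_rem_le_card (K : Finset (Fin m)) (ht : 0 ≤ t) :
    ∑ k ∈ K, (1 - E.rem k t) ≤ K.card := by
  refine (Finset.sum_le_sum fun k _ => ?_).trans_eq (b := ∑ _k ∈ K, (1 : ℝ)) (by simp)
  linarith [E.rem_nonneg (j := k) ht]

lemma card_mul_le_sum_one_sub_rem (A : Finset (Fin n)) (K : Finset (Fin m)) (ht : 0 ≤ t)
    (h : ∀ i ∈ A, ∀ s ∈ Ioo 0 t, ∃ k ∈ K, E.eats i s = some k) :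
    A.card * t ≤ ∑ k ∈ K, (1 - E.rem k t) := by
  rw [E.sum_one_sub_rem K ht]
  calc (A.card : ℝ) * t = ∑ _i ∈ A, (t - 0) := by simp
    _ ≤ ∑ i ∈ A, ∑ k ∈ K, E.eatingTime i k 0 t :=
      Finset.sum_le_sum fun i hi => E.le_sum_eatingTime K ht (h i hi)
    _ ≤ ∑ i, ∑ k ∈ K, E.eatingTime i k 0 t :=
      Finset.sum_le_sum_of_subset_of_nonneg (Finset.subset_univ A)
        fun _ _ _ => Finset.sum_nonneg fun _ _ => E.eatingTime_nonneg

lemma exists_rem_pos (K : Finset (Fin m)) (ht : 0 ≤ t) (h : n * t < K.card) :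
    ∃ k ∈ K, 0 < E.rem k t := by
  by_contra! hK
  have hsum : ∑ k ∈ K, (1 - E.rem k t) = K.card := by
    rw [Finset.sum_congr rfl fun k hk => by rw [le_antisymm (hK k hk) (E.rem_nonneg ht)]]
    simp
  linarith [E.sum_one_sub_rem_le_mul K ht]

lemma eats_exists (ht : 0 ≤ t) (hi : active i t) (hj : 0 < E.rem j t) :
    ∃ k, E.eats i t = some k ∧ rk i k ≤ rk i j := by
  obtain ⟨k, hk, hkmin⟩ := Finset.exists_min_image
    (Finset.univ.filter fun k => 0 < E.rem k t) (rk i) ⟨j, by simpa using hj⟩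
  simp only [Finset.mem_filter, Finset.mem_univ, true_and] at hk hkmin
  exact ⟨k, (E.eats_iff i t ht hi k).2 ⟨hk, hkmin⟩, hkmin j hj⟩

lemma eats_ne_of_rk_lt {j' : Fin m} (ht : 0 ≤ t) (hi : active i t) (hj' : 0 < E.rem j' t)
    (hlt : rk i j' < rk i j) : E.eats i t ≠ some j :=
  fun hij => ((E.eats_iff i t ht hi j).1 hij).2 j' hj' |>.not_gt hlt

lemma eats_iff_rem_pos_of_rk_le (ht : 0 ≤ t) (hi : active i t)
    (hj : ∀ j', rk i j ≤ rk i j') : E.eats i t = some j ↔ 0 < E.rem j t := by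
  rw [E.eats_iff i t ht hi j]
  exact ⟨And.left, fun h => ⟨h, fun j' _ => hj j'⟩⟩

variable {A : Finset (Fin n)}

lemma rem_eq_one_sub_card_mul_volume (ht : 0 ≤ t)
    (hA : ∀ s, 0 < s → s ≤ t → ∀ i, E.eats i s = some j ↔ i ∈ A ∧ 0 < E.rem j s) :
    E.rem j t = 1 - A.card * (volume (Ioc 0 t ∩ {s | 0 < E.rem j s})).toReal := by
  have heat : ∀ i, E.eatingTime i j 0 t =
      if i ∈ A then (volume (Ioc 0 t ∩ {s | 0 < E.rem j s})).toReal else 0 := by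
    intro i
    have hset :
        Ioc 0 t ∩ {s | E.eats i s = some j} = Ioc 0 t ∩ {s | i ∈ A ∧ 0 < E.rem j s} :=
      ext fun s => and_congr_right fun hs => hA s hs.1 hs.2 i
    split_ifs with hi <;> simp [eatingTime, hset, hi]
  rw [E.rem_eq ht, Finset.sum_congr rfl fun i _ => heat i, Finset.sum_ite_mem, Finset.univ_inter,
    Finset.sum_const, nsmul_eq_mul]

lemma rem_pos_of_card_mul_lt (ht : 0 ≤ t)
    (hA : ∀ s, 0 < s → s ≤ t → ∀ i, E.eats i s = some j ↔ i ∈ A ∧ 0 < E.rem j s)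
    (h : A.card * t < 1) : 0 < E.rem j t := by
  have hvol : (volume (Ioc 0 t ∩ {s | 0 < E.rem j s})).toReal ≤ t := by
    calc _ ≤ volume.real (Ioc 0 t) := measureReal_mono inter_subset_left measure_Ioc_lt_top.ne
      _ = t := by simp [ht]
  rw [E.rem_eq_one_sub_card_mul_volume ht hA]
  nlinarith [(A.card.cast_nonneg : (0 : ℝ) ≤ A.card)]

lemma rem_eq_zero_of_card_mul_eq (ht : 0 ≤ t)
    (hA : ∀ s, 0 < s → s ≤ t → ∀ i, E.eats i s = some j ↔ i ∈ A ∧ 0 < E.rem j s)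
    (h : A.card * t = 1) : E.rem j t = 0 := by
  have hcard : (0 : ℝ) < A.card := by
    rcases (A.card.cast_nonneg : (0 : ℝ) ≤ A.card).eq_or_lt with h0 | h0
    · simp [← h0] at h
    · exact h0
  have hpos : ∀ s ∈ Ioo 0 t, 0 < E.rem j s := fun s hs =>
    E.rem_pos_of_card_mul_lt hs.1.le (fun u hu hus => hA u hu (hus.trans hs.2.le))
      (h ▸ mul_lt_mul_of_pos_left hs.2 hcard)
  have hvol : t ≤ (volume (Ioc 0 t ∩ {s | 0 < E.rem j s})).toReal := by
    calc t = volume.real (Ioo 0 t) := by simp [ht]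
      _ ≤ (volume (Ioc 0 t ∩ {s | 0 < E.rem j s})).toReal :=
        measureReal_mono (fun s hs => ⟨Ioo_subset_Ioc_self hs, hpos s hs⟩)
          ((measure_mono inter_subset_left).trans_lt measure_Ioc_lt_top).ne
  have hle := E.rem_eq_one_sub_card_mul_volume ht hA
  nlinarith [E.rem_nonneg (j := j) ht]

lemma utility_dicho (O : Finset (Fin m)) (i : Fin n) :
    E.utility (dicho O) i = ∑ j ∈ O, E.alloc i j := by
  simp [utility, dicho, ite_mul, Finset.sum_ite_mem]

lemma alloc_eq_zero (h : ∀ s, 0 < s → E.eats i s ≠ some j) : E.alloc i j = 0 := by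
  have : {s | 0 < s ∧ E.eats i s = some j} = ∅ :=
    eq_empty_of_forall_notMem fun s hs => h s hs.1 hs.2
  simp [alloc, this]

lemma alloc_eq_of_eats_iff_lt {τ : ℝ} (hτ : 0 ≤ τ)
    (h : ∀ s, 0 < s → (E.eats i s = some j ↔ s < τ)) : E.alloc i j = τ := by
  have : {s | 0 < s ∧ E.eats i s = some j} = Ioo 0 τ :=
    ext fun s => and_congr_right fun hs => h s hs
  simp [alloc, this, hτ]

end General

section TightExample

variable {n : ℕ} {rk : Fin n → Fin n → ℕ} (E : PSExec n n rk (fun _ _ => True))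

lemma tight_eats_iff {j0 : Fin n} (hj0 : (j0 : ℕ) = 0) (hn : 3 ≤ n)
    (hrk12 : ∀ i : Fin n, (i : ℕ) ≤ 1 → ∀ j : Fin n, rk i j = (j : ℕ))
    (hrkrest : ∀ i : Fin n, 2 ≤ (i : ℕ) → ∀ j : Fin n,
        rk i j = if (j : ℕ) = 0 then n else (j : ℕ))
    {s : ℝ} (hs : 0 < s) (hs' : s ≤ 1 / 2) (i : Fin n) :
    E.eats i s = some j0 ↔
      i ∈ (Finset.range 2).attachFin (fun _ h => (Finset.mem_range.1 h).trans_le (by omega)) ∧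
        0 < E.rem j0 s := by
  rw [Finset.mem_attachFin, Finset.mem_range]
  by_cases hi : (i : ℕ) < 2
  · rw [E.eats_iff_rem_pos_of_rk_le hs.le trivial fun j' => by simp [hrk12 i (by omega), hj0]]
    simp [hi]
  · obtain ⟨k, hk, hkpos⟩ := E.exists_rem_pos (Finset.univ.erase j0) hs.le (by
      rw [Finset.card_erase_of_mem (Finset.mem_univ _), Finset.card_univ, Fintype.card_fin,
        Nat.cast_sub (by omega), Nat.cast_one]
      have : (3 : ℝ) ≤ n := by exact_mod_cast hn
      nlinarith)
    have hk0 : (k : ℕ) ≠ 0 := fun h => (Finset.ne_of_mem_erase hk) (Fin.ext (h.trans hj0.symm))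
    simp only [hi, false_and, iff_false]
    refine E.eats_ne_of_rk_lt hs.le trivial hkpos ?_
    rw [hrkrest i (by omega), hrkrest i (by omega), if_neg hk0, if_pos hj0]
    exact k.isLt

lemma tight_rem_pos_iff {j0 : Fin n} (hj0 : (j0 : ℕ) = 0) (hn : 3 ≤ n)
    (hrk12 : ∀ i : Fin n, (i : ℕ) ≤ 1 → ∀ j : Fin n, rk i j = (j : ℕ))
    (hrkrest : ∀ i : Fin n, 2 ≤ (i : ℕ) → ∀ j : Fin n,
        rk i j = if (j : ℕ) = 0 then n else (j : ℕ))
    (t : ℝ) (ht : 0 ≤ t) : 0 < E.rem j0 t ↔ t < 1 / 2 := by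
  have hA := fun (s : ℝ) (hs : 0 < s) (hs' : s ≤ 1 / 2) =>
    E.tight_eats_iff hj0 hn hrk12 hrkrest hs hs'
  refine ⟨fun hpos => not_le.1 fun hle => ?_, fun hlt =>
    E.rem_pos_of_card_mul_lt ht (fun s hs hst => hA s hs (hst.trans hlt.le)) (by simp; linarith)⟩
  have hzero : E.rem j0 (1 / 2) = 0 := E.rem_eq_zero_of_card_mul_eq (by norm_num) hA (by simp)
  linarith [E.rem_le_rem (j := j0) (by norm_num) hle]

lemma tight_rem_half_eq_zero (hne : Even n)
    (hrkrest : ∀ i : Fin n, 2 ≤ (i : ℕ) → ∀ j : Fin n,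
        rk i j = if (j : ℕ) = 0 then n else (j : ℕ))
    {j : Fin n} (hj1 : 1 ≤ (j : ℕ)) (hj2 : (j : ℕ) ≤ n / 2 - 2) : E.rem j (1 / 2) = 0 := by
  refine le_antisymm (not_lt.1 fun hpos => ?_) (E.rem_nonneg (by norm_num))
  let A : Finset (Fin n) := (Finset.Ico 2 n).attachFin fun _ h => (Finset.mem_Ico.1 h).2
  let K : Finset (Fin n) :=
    (Finset.Icc 1 (j : ℕ)).attachFin fun _ h => (Finset.mem_Icc.1 h).2.trans_lt j.isLt
  have heatK : ∀ i ∈ A, ∀ s ∈ Ioo 0 (1 / 2 : ℝ), ∃ k ∈ K, E.eats i s = some k := by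
    intro i hi s hs
    have hi : 2 ≤ (i : ℕ) := (Finset.mem_Ico.1 (Finset.mem_attachFin _ |>.1 hi)).1
    obtain ⟨k, hk, hkj⟩ := E.eats_exists hs.1.le trivial
      (hpos.trans_le (E.rem_le_rem hs.1.le hs.2.le))
    refine ⟨k, Finset.mem_attachFin _ |>.2 (Finset.mem_Icc.2 ?_), hk⟩
    rw [hrkrest i hi, hrkrest i hi, if_neg (by omega : (j : ℕ) ≠ 0)] at hkj
    split_ifs at hkj with hk0 <;> omega
  have hbound := (E.card_mul_le_sum_one_sub_rem A K (by norm_num) heatK).trans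
    (E.sum_one_sub_rem_le_card K (by norm_num))
  simp only [A, K, Finset.card_attachFin, Nat.card_Ico, Nat.card_Icc, Nat.add_sub_cancel] at hbound
  have : n - 2 ≤ 2 * (j : ℕ) := by
    exact_mod_cast (by linarith : ((n - 2 : ℕ) : ℝ) ≤ 2 * (j : ℕ))
  have := Nat.even_iff.1 hne
  omega

end TightExample

end PSExec

/-- tight example, truthful profile: `n = m` even, `n ≥ 8`; agents 1 and 2
report `o₁ ≻ o₂ ≻ ⋯ ≻ oₙ` and every other agent reports `o₂ ≻ o₃ ≻ ⋯ ≻ oₙ ≻ o₁` (items are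
indexed so that `o_k` is the item of index `k - 1`).  Then agent 1 receives exactly `1/2` of
`o₁` and nothing of `o₂, …, o_{n/2-1}`; with dichotomous utilities on
`O̅ = {o₁, …, o_{n/2-1}}` its truthful utility is `1/2`. -/
theorem tight_example_truthful
    (n : ℕ) (hn : 8 ≤ n) (hne : Even n)
    (rk : Fin n → Fin n → ℕ)
    (hrk12 : ∀ i : Fin n, (i : ℕ) ≤ 1 → ∀ j : Fin n, rk i j = (j : ℕ))
    (hrkrest : ∀ i : Fin n, 2 ≤ (i : ℕ) → ∀ j : Fin n,
        rk i j = if (j : ℕ) = 0 then n else (j : ℕ))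
    (E : PSExec n n rk (fun _ _ => True))
    (i1 : Fin n) (hi1 : (i1 : ℕ) = 0) :
    E.alloc i1 ⟨0, by omega⟩ = 1 / 2 ∧
    (∀ j : Fin n, 1 ≤ (j : ℕ) → (j : ℕ) ≤ n / 2 - 2 → E.alloc i1 j = 0) ∧
    E.utility (dicho (Finset.univ.filter (fun j : Fin n => (j : ℕ) ≤ n / 2 - 2))) i1
      = 1 / 2 := by
  set j0 : Fin n := ⟨0, by omega⟩
  have hrk1 := hrk12 i1 (by omega)
  have hpos := E.tight_rem_pos_iff (j0 := j0) rfl (by omega) hrk12 hrkrest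
  have half : E.alloc i1 j0 = 1 / 2 :=
    E.alloc_eq_of_eats_iff_lt (by norm_num) fun s hs =>
      (E.eats_iff_rem_pos_of_rk_le hs.le trivial fun j' => by simp [hrk1, j0]).trans
        (hpos s hs.le)
  have nothing : ∀ j : Fin n, 1 ≤ (j : ℕ) → (j : ℕ) ≤ n / 2 - 2 → E.alloc i1 j = 0 := by
    intro j hj1 hj2
    refine E.alloc_eq_zero fun s hs => ?_
    rcases lt_or_ge s (1 / 2) with hs' | hs'
    · exact E.eats_ne_of_rk_lt hs.le trivial ((hpos s hs.le).2 hs')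
        (by simp [hrk1, j0]; omega)
    · refine E.eats_ne_of_rem_nonpos hs.le ?_
      rw [← E.tight_rem_half_eq_zero hne hrkrest hj1 hj2]
      exact E.rem_le_rem (by norm_num) hs'
  refine ⟨half, nothing, ?_⟩
  rw [E.utility_dicho, Finset.sum_eq_single_of_mem j0 (by simp [j0]) fun j hj hj0 =>
    nothing j (by simpa [Fin.ext_iff, j0, Nat.one_le_iff_ne_zero] using hj0) (by simpa using hj)]
  exact half
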